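/- arXiv:math/0611018 — 3 statements merged into one kernel-verified Lean document; each statement's English description precedes it below -/
import Mathlib

section
/- Let m be odd, n = 2m, and h ∈ ℂ(x) a nonzero rational function. Define the birational map α(x,y) = (e^{2πi/n}·x, (h(x^m)y − h(x^m)h(−x^m))/(y + h(x^m))). Then α²(x,y) = (e^{2πi/m}·x, −h(x^m)h(−x^m)/y), and α^n(x,y) = (x, −h(x^m)h(−x^m)/y). -/
/-!
Write `A = h(x^m)`, `B = h(-x^m)`. Since `ζ^m = -1`, `α` sends the fibre over `x` to the fibre
over `ζ x` by the Möbius map `y ↦ (A y - A B)/(y + A)`, and over `ζ x` the roles of `A` and `B`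
are exchanged; the composite of the two Möbius maps is `y ↦ -A B / y`. Hence `α² = σ ∘ τ` with
`σ(x, y) = (ζ² x, y)` and `τ(x, y) = (x, -A B / y)`. These commute because `x^m` is
`σ`-invariant, `σ^m = id` and `τ` is an involution, so for odd `m`,
`α^(2m) = σ^m ∘ τ^m = τ`.
-/

open Function

theorem Function.iterate_apply_eq_of_forall_apply_iterate {X : Type*} {f g : X → X} {x : X}
    (h : ∀ k, f (f^[k] x) = g (f^[k] x)) (n : ℕ) : f^[n] x = g^[n] x := by
  induction n with
  | zero => rfl
  | succ n ih => rw [iterate_succ_apply', iterate_succ_apply', h, ih]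

theorem mobius_swap_comp_mobius {K : Type*} [Field K] {A B y : K} (hy : y + A ≠ 0)
    (hz : (A * y - A * B) / (y + A) + B ≠ 0) :
    (B * ((A * y - A * B) / (y + A)) - B * A) / ((A * y - A * B) / (y + A) + B)
      = -(A * B) / y := by
  have hsum : (A * y - A * B) / (y + A) + B = (A + B) * y / (y + A) := by
    field_simp; ring
  rw [hsum] at hz ⊢
  have hAB : A + B ≠ 0 := fun h ↦ hz (by rw [h, zero_mul, zero_div])
  have hy0 : y ≠ 0 := fun h ↦ hz (by rw [h, mul_zero, zero_div])
  field_simp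
  ring

namespace DeJonquieres

variable {K : Type*} [Field K] (ζ : K) (m : ℕ) (H : K → K)

def alpha (p : K × K) : K × K :=
  (ζ * p.1, (H (p.1 ^ m) * p.2 - H (p.1 ^ m) * H (-(p.1 ^ m))) / (p.2 + H (p.1 ^ m)))

def rotation (ω : K) : K × K → K × K := Prod.map (ω * ·) id

def fiberInvolution (p : K × K) : K × K := (p.1, -(H (p.1 ^ m) * H (-(p.1 ^ m))) / p.2)

variable {ζ m H}

theorem rotation_iterate (ω : K) (k : ℕ) : (rotation ω)^[k] = rotation (ω ^ k) := by
  rw [rotation, Prod.map_iterate, mul_left_iterate, iterate_id]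
  rfl

theorem commute_rotation_fiberInvolution {ω : K} (hω : ω ^ m = 1) :
    Function.Commute (rotation ω) (fiberInvolution m H) := by
  intro p
  simp [rotation, fiberInvolution, mul_pow, hω]

theorem fiberInvolution_fiberInvolution {p : K × K} (hA : H (p.1 ^ m) ≠ 0)
    (hB : H (-(p.1 ^ m)) ≠ 0) : fiberInvolution m H (fiberInvolution m H p) = p := by
  simp only [fiberInvolution]
  rw [div_div_cancel₀ (neg_ne_zero.mpr (mul_ne_zero hA hB))]

theorem alpha_alpha (hζ : ζ ^ m = -1) {p : K × K} (h₁ : p.2 + H (p.1 ^ m) ≠ 0)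
    (h₂ : (alpha ζ m H p).2 + H ((alpha ζ m H p).1 ^ m) ≠ 0) :
    alpha ζ m H (alpha ζ m H p) = rotation (ζ ^ 2) (fiberInvolution m H p) := by
  have hpow : (ζ * p.1) ^ m = -(p.1 ^ m) := by rw [mul_pow, hζ, neg_one_mul]
  simp only [alpha, hpow, neg_neg] at h₂ ⊢
  simp only [rotation, fiberInvolution, Prod.map, id, sq, mul_assoc,
    mobius_swap_comp_mobius h₁ h₂]

theorem alpha_iterate_two_mul (hζ : ζ ^ m = -1) (hm : Odd m) {p : K × K}
    (hA : H (p.1 ^ m) ≠ 0) (hB : H (-(p.1 ^ m)) ≠ 0)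
    (hden : ∀ k, ((alpha ζ m H)^[k] p).2 + H (((alpha ζ m H)^[k] p).1 ^ m) ≠ 0) :
    (alpha ζ m H)^[2 * m] p = fiberInvolution m H p := by
  have hω : (ζ ^ 2) ^ m = 1 := by rw [← pow_mul, mul_comm, pow_mul, hζ, neg_one_sq]
  have horbit : ∀ k, (alpha ζ m H)^[2] (((alpha ζ m H)^[2])^[k] p)
      = (rotation (ζ ^ 2) ∘ fiberInvolution m H) (((alpha ζ m H)^[2])^[k] p) := by
    intro k
    -- `α² = σ ∘ τ` holds only where both denominators are nonzero, i.e. along the orbit of `p`.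
    rw [← iterate_mul]
    exact alpha_alpha hζ (hden (2 * k))
      (by simpa only [iterate_succ_apply'] using hden (2 * k + 1))
  have hperiodic : IsPeriodicPt (fiberInvolution m H) 2 p :=
    fiberInvolution_fiberInvolution hA hB
  rw [iterate_mul, iterate_apply_eq_of_forall_apply_iterate horbit,
    (commute_rotation_fiberInvolution hω).comp_iterate, comp_apply, rotation_iterate, hω,
    ← hperiodic.iterate_mod_apply, Nat.odd_iff.mp hm, iterate_one]
  simp only [rotation, Prod.map, one_mul, id]

end DeJonquieres

theorem Complex.exp_two_pi_I_div_two_mul_pow {m : ℕ} (hm : m ≠ 0) :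
    Complex.exp (2 * Real.pi * Complex.I / (2 * m)) ^ m = -1 := by
  have hm' : (m : ℂ) ≠ 0 := Nat.cast_ne_zero.mpr hm
  rw [← Complex.exp_nat_mul,
    show (m : ℂ) * (2 * Real.pi * Complex.I / (2 * m)) = Real.pi * Complex.I by field_simp,
    Complex.exp_pi_mul_I]

theorem Complex.exp_two_pi_I_div_two_mul_sq (m : ℕ) :
    Complex.exp (2 * Real.pi * Complex.I / (2 * m)) ^ 2
      = Complex.exp (2 * Real.pi * Complex.I / m) := by
  rw [← Complex.exp_nat_mul]
  congr 1
  push_cast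
  ring

theorem stmt7_general (m : ℕ) (hm : Odd m) (h : RatFunc ℂ) :
    let H : ℂ → ℂ := fun t => RatFunc.eval (RingHom.id ℂ) t h
    let ζ : ℂ := Complex.exp (2 * (Real.pi : ℂ) * Complex.I / (2 * m))
    let α : ℂ × ℂ → ℂ × ℂ := fun p =>
      (ζ * p.1,
        (H (p.1 ^ m) * p.2 - H (p.1 ^ m) * H (-(p.1 ^ m))) / (p.2 + H (p.1 ^ m)))
    ∀ p : ℂ × ℂ, p.2 ≠ 0 → H (p.1 ^ m) ≠ 0 → H (-(p.1 ^ m)) ≠ 0 →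
      (∀ k : ℕ, (α^[k] p).2 + H ((α^[k] p).1 ^ m) ≠ 0) →
      α (α p) = (Complex.exp (2 * (Real.pi : ℂ) * Complex.I / (m : ℂ)) * p.1,
          -(H (p.1 ^ m) * H (-(p.1 ^ m))) / p.2) ∧
      α^[2 * m] p = (p.1, -(H (p.1 ^ m) * H (-(p.1 ^ m))) / p.2) := by
  intro H ζ α p _ hA hB hden
  have hζ : ζ ^ m = -1 := Complex.exp_two_pi_I_div_two_mul_pow hm.pos.ne'
  refine ⟨?_, DeJonquieres.alpha_iterate_two_mul hζ hm hA hB hden⟩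
  rw [← Complex.exp_two_pi_I_div_two_mul_sq]
  exact DeJonquieres.alpha_alpha hζ (hden 0) (hden 1)

/-- Let `m` be odd, `n = 2m`, and `h ∈ ℂ(x)` a nonzero rational function.  The
birational map `α(x,y) = (e^{2πi/n}x, (h(x^m)y − h(x^m)h(−x^m))/(y + h(x^m)))`
satisfies `α²(x,y) = (e^{2πi/m}x, −h(x^m)h(−x^m)/y)` and
`αⁿ(x,y) = (x, −h(x^m)h(−x^m)/y)` (wherever all the intermediate maps are
defined). -/
theorem stmt7 (m : ℕ) (hm : Odd m) (hm0 : 0 < m) (h : RatFunc ℂ) (hh : h ≠ 0) :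
    let H : ℂ → ℂ := fun t => RatFunc.eval (RingHom.id ℂ) t h
    let ζ : ℂ := Complex.exp (2 * (Real.pi : ℂ) * Complex.I / (2 * m))
    let α : ℂ × ℂ → ℂ × ℂ := fun p =>
      (ζ * p.1,
        (H (p.1 ^ m) * p.2 - H (p.1 ^ m) * H (-(p.1 ^ m))) / (p.2 + H (p.1 ^ m)))
    ∀ p : ℂ × ℂ, p.2 ≠ 0 → H (p.1 ^ m) ≠ 0 → H (-(p.1 ^ m)) ≠ 0 →
      (∀ k : ℕ, (α^[k] p).2 + H ((α^[k] p).1 ^ m) ≠ 0) →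
      α (α p) = (Complex.exp (2 * (Real.pi : ℂ) * Complex.I / (m : ℂ)) * p.1,
          -(H (p.1 ^ m) * H (-(p.1 ^ m))) / p.2) ∧
      α^[2 * m] p = (p.1, -(H (p.1 ^ m) * H (-(p.1 ^ m))) / p.2) :=
  stmt7_general m hm h
end

section
/- Let S be the surface w² = z³ + x⁴z + xy⁵ in P(3,1,1,2). The map δ(w:x:y:z) = (iw : x : e^{2πi/10}y : −z) is an automorphism of S of order 20. -/
/-!
On coordinates, `δ` is the diagonal scaling by `(i, 1, ζ, -1)` with `ζ = e^{2πi/10}`, so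
`δ^k` is the scaling by `(iᵏ, 1, ζᵏ, (-1)ᵏ)`. Since `i² = -1` and `ζ⁵ = -1`, each monomial of
`w² - z³ - x⁴z - xy⁵` is multiplied by `-1`, so the equation is preserved, and `δ²⁰ = id`.
At the point `(1 : 1 : 1 : 0)` of `S` a weighted rescaling by `λ` fixes `x = 1` only for `λ = 1`,
so `δ^k` fixes this point of `ℙ(3,1,1,2)` only if `iᵏ = ζᵏ = 1`, i.e. `lcm(4, 10) = 20 ∣ k`.
-/

open Function Complex

def scaleCoords {R : Type*} [Mul R] (a b c d : R) : R × R × R × R → R × R × R × R :=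
  fun p => (a * p.1, b * p.2.1, c * p.2.2.1, d * p.2.2.2)

section scaleCoords

variable {R : Type*}

theorem iterate_scaleCoords [Monoid R] (a b c d : R) (k : ℕ) :
    (scaleCoords a b c d)^[k] = scaleCoords (a ^ k) (b ^ k) (c ^ k) (d ^ k) := by
  induction k with
  | zero => funext p; simp [scaleCoords]
  | succ k ih =>
    funext p
    simp only [iterate_succ_apply', ih, scaleCoords, pow_succ', mul_assoc]

theorem scaleCoords_one [MulOneClass R] : scaleCoords (1 : R) 1 1 1 = id := by
  funext p; simp [scaleCoords]

theorem scaleCoords_eq_zero_iff [MulZeroClass R] [NoZeroDivisors R] {a b c d : R}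
    (ha : a ≠ 0) (hb : b ≠ 0) (hc : c ≠ 0) (hd : d ≠ 0) {p : R × R × R × R} :
    scaleCoords a b c d p = 0 ↔ p = 0 := by
  simp [scaleCoords, Prod.ext_iff, ha, hb, hc, hd]

theorem eq_one_of_scaleCoords_eq_weighted [CommRing R] [IsDomain R] {a c d l : R}
    {p : R × R × R × R} (hw : p.1 ≠ 0) (hx : p.2.1 ≠ 0) (hy : p.2.2.1 ≠ 0)
    (h : scaleCoords a 1 c d p = (l ^ 3 * p.1, l * p.2.1, l * p.2.2.1, l ^ 2 * p.2.2.2)) :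
    a = 1 ∧ c = 1 := by
  simp only [scaleCoords, Prod.ext_iff] at h
  obtain ⟨hw', hx', hy', -⟩ := h
  have hl : l = 1 := (mul_right_cancel₀ hx hx').symm
  subst hl
  exact ⟨mul_right_cancel₀ hw (by simpa using hw'), mul_right_cancel₀ hy (by simpa using hy')⟩

end scaleCoords

theorem isPrimitiveRoot_exp_two_pi_I_div_ten :
    IsPrimitiveRoot (exp (2 * (Real.pi : ℂ) * I / 10)) 10 := by
  exact_mod_cast isPrimitiveRoot_exp 10 (by norm_num)

theorem exp_two_pi_I_div_ten_pow_five : exp (2 * (Real.pi : ℂ) * I / 10) ^ 5 = -1 :=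
  (isPrimitiveRoot_exp_two_pi_I_div_ten.pow_of_dvd (by norm_num) (by norm_num)
    ).eq_neg_one_of_two_right

/-- Let `S` be the surface `w² = z³ + x⁴z + xy⁵` in `ℙ(3,1,1,2)` (points are
nonzero `(w,x,y,z) ∈ ℂ⁴` modulo `(w,x,y,z) ∼ (λ³w, λx, λy, λ²z)`).  The map
`δ(w:x:y:z) = (iw : x : e^{2πi/10}y : −z)` is an automorphism of `S` of
order exactly `20`. -/
theorem stmt14 :
    let S : Set (ℂ × ℂ × ℂ × ℂ) :=
      {p | p ≠ 0 ∧
        p.1 ^ 2 = p.2.2.2 ^ 3 + p.2.1 ^ 4 * p.2.2.2 + p.2.1 * p.2.2.1 ^ 5}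
    let R : ℂ × ℂ × ℂ × ℂ → ℂ × ℂ × ℂ × ℂ → Prop := fun p q =>
      ∃ l : ℂ, l ≠ 0 ∧
        q = (l ^ 3 * p.1, l * p.2.1, l * p.2.2.1, l ^ 2 * p.2.2.2)
    let δ : ℂ × ℂ × ℂ × ℂ → ℂ × ℂ × ℂ × ℂ := fun p =>
      (Complex.I * p.1, p.2.1,
        Complex.exp (2 * (Real.pi : ℂ) * Complex.I / 10) * p.2.2.1,
        -p.2.2.2)
    (∀ p ∈ S, δ p ∈ S) ∧
    (∀ p, δ^[20] p = p) ∧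
    (∀ k : ℕ, 0 < k → k < 20 → ∃ p ∈ S, ¬ R p (δ^[k] p)) := by
  intro S R δ
  set ζ := exp (2 * (Real.pi : ℂ) * I / 10)
  have hζ : IsPrimitiveRoot ζ 10 := isPrimitiveRoot_exp_two_pi_I_div_ten
  have hδ : δ = scaleCoords I 1 ζ (-1) := by
    funext p; simp only [δ, scaleCoords, one_mul, neg_one_mul]; rfl
  refine ⟨?_, fun p => ?_, fun k hk hk20 => ?_⟩
  · rintro ⟨w, x, y, z⟩ ⟨hp, heq⟩
    rw [hδ]
    have hscale := scaleCoords_eq_zero_iff I_ne_zero one_ne_zero (hζ.ne_zero (by norm_num))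
      (by norm_num : (-1 : ℂ) ≠ 0) (p := (w, x, y, z))
    refine ⟨hscale.not.2 hp, ?_⟩
    simp only [scaleCoords]
    linear_combination -heq + w ^ 2 * I_sq - x * y ^ 5 * exp_two_pi_I_div_ten_pow_five
  · have hI20 : I ^ 20 = 1 := (isPrimitiveRoot_I.pow_eq_one_iff_dvd 20).2 (by norm_num)
    have hζ20 : ζ ^ 20 = 1 := (hζ.pow_eq_one_iff_dvd 20).2 (by norm_num)
    rw [hδ, iterate_scaleCoords, hI20, hζ20, one_pow, (by norm_num : (-1 : ℂ) ^ 20 = 1),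
      scaleCoords_one, id]
  · refine ⟨(1, 1, 1, 0), ⟨by simp, by norm_num⟩, ?_⟩
    rintro ⟨l, -, h⟩
    rw [hδ, iterate_scaleCoords, one_pow] at h
    obtain ⟨hIk, hζk⟩ := eq_one_of_scaleCoords_eq_weighted one_ne_zero one_ne_zero one_ne_zero h
    have h4 := (isPrimitiveRoot_I.pow_eq_one_iff_dvd k).1 hIk
    have h10 := (hζ.pow_eq_one_iff_dvd k).1 hζk
    omega
end

section
/- In PGL(2, ℂ(x)), the n-fold product of matrices [[ν(x), g(x)],[1, ν(x)]] · [[ν(ξx), g(x)],[1, ν(ξx)]] ⋯ [[ν(ξ^{n−1}x), g(x)],[1, ν(ξ^{n−1}x)]] equals [[0, g(x)],[1, 0]] if and only if the norm of ν(x)+√(g(x)) under the extension ℂ(x)[√g]/ℂ(xⁿ)[√g] is a ℂ(x)-multiple of √(g(x)). -/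
/-- In `PGL(2, ℂ(x))`, the product
`[[ν(x), g],[1, ν(x)]]·[[ν(ξx), g],[1, ν(ξx)]]⋯[[ν(ξ^{n−1}x), g],[1, ν(ξ^{n−1}x)]]`
equals the class of `[[0, g],[1, 0]]` (i.e. the two matrices agree up to a
nonzero scalar) if and only if the norm of `ν + √g` under the extension
`ℂ(x)[√g]/ℂ(xⁿ)[√g]` is a nonzero `ℂ(x)`-multiple of `√g`.  Here `σ` is the
automorphism of `ℂ(x)` with `σ(x) = ξx`, `ξ = e^{2πi/n}`, extended to
`ℂ(x)[√g]` fixing `√g`; elements `α + β√g` of `ℂ(x)[√g]` are encoded as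
pairs `(α, β)` with multiplication
`(α,β)·(α',β') = (αα' + ββ'g, αβ' + βα')`, and the norm is
`∏ᵢ σⁱ(ν + √g)`. -/
theorem stmt19 (n : ℕ) (hn : 1 ≤ n)
    (ξ : ℂ) (hξ : ξ = Complex.exp (2 * (Real.pi : ℂ) * Complex.I / n))
    (σ : RatFunc ℂ ≃+* RatFunc ℂ)
    (hσX : σ RatFunc.X = RatFunc.C ξ * RatFunc.X)
    (hσC : ∀ c : ℂ, σ (RatFunc.C c) = RatFunc.C c)
    (g : RatFunc ℂ) (hg : ¬ ∃ r : RatFunc ℂ, r ^ 2 = g) (hginv : σ g = g)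
    (ν : RatFunc ℂ) :
    let M : ℕ → Matrix (Fin 2) (Fin 2) (RatFunc ℂ) := fun i =>
      !![(σ ^ i) ν, g; 1, (σ ^ i) ν]
    let mul' : RatFunc ℂ × RatFunc ℂ → RatFunc ℂ × RatFunc ℂ →
        RatFunc ℂ × RatFunc ℂ :=
      fun p q => (p.1 * q.1 + p.2 * q.2 * g, p.1 * q.2 + p.2 * q.1)
    let Nrm : RatFunc ℂ × RatFunc ℂ :=
      List.foldr mul' (1, 0)
        ((List.range n).map fun i => ((σ ^ i) ν, (1 : RatFunc ℂ)))
    ((∃ c : RatFunc ℂ, c ≠ 0 ∧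
        ((List.range n).map M).prod = !![0, c * g; c, 0]) ↔
      ∃ β : RatFunc ℂ, β ≠ 0 ∧ Nrm = (0, β)) := by
  intro M mul' Nrm
  have key : ∀ l : List (RatFunc ℂ × RatFunc ℂ),
      ((l.map fun p => !![p.1, p.2 * g; p.2, p.1]).prod :
          Matrix (Fin 2) (Fin 2) (RatFunc ℂ)) =
        !![(l.foldr mul' (1,0)).1, (l.foldr mul' (1,0)).2 * g;
           (l.foldr mul' (1,0)).2, (l.foldr mul' (1,0)).1] := by
    intro l
    induction l with
    | nil => simp [Matrix.one_fin_two]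
    | cons p t ih =>
        simp only [List.map_cons, List.prod_cons, List.foldr_cons, ih, mul']
        ext i j
        fin_cases i <;> fin_cases j <;>
          simp [Matrix.mul_apply, Fin.sum_univ_two] <;> ring
  have hM : (List.range n).map M =
      (((List.range n).map fun i => ((σ^i) ν, (1:RatFunc ℂ))).map
        fun p => !![p.1, p.2 * g; p.2, p.1]) := by
    simp [M, List.map_map]
  have hprod : ((List.range n).map M).prod = !![Nrm.1, Nrm.2 * g; Nrm.2, Nrm.1] := by
    rw [hM, key]
  constructor
  · rintro ⟨c, hc, h⟩
    rw [hprod] at h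
    have h1 := congrFun (congrFun h 0) 0
    have h2 := congrFun (congrFun h 1) 0
    simp at h1 h2
    exact ⟨c, hc, Prod.ext h1 h2⟩
  · rintro ⟨β, hβ, h⟩
    refine ⟨β, hβ, ?_⟩
    rw [hprod, h]
end
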